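/- arXiv:2112.03329 — 4 statements merged into one kernel-verified Lean document; each statement's English description precedes it below -/
import Mathlib

section
/- For every integer m ≥ 1 and every real β with 0 < β < 1, there exists a time-inconsistent planning model M = (G, w, s, t, β) in which G has exactly 3m+1 vertices and all edge weights are nonnegative, such that every directed s–t path of G is feasible, G has exactly 2^m directed s–t paths, and the total costs of these 2^m paths are pairwise distinct. -/
/-!
Common definitions for time-inconsistent planning models (Kleinberg–Oren).
A task graph is given by a finite vertex type `V`, an edge relation
`E : V → V → Prop` and edge weights `w : V → V → ℝ`.  A directed path is
represented by the list of its vertices (nonempty, consecutive vertices joined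
by edges, no repeated vertices).
-/

variable {V : Type*}

/-- The (real) cost of a path: the sum of the weights of its edges. -/
def pathCost (w : V → V → ℝ) (p : List V) : ℝ :=
  ((p.zip p.tail).map fun e => w e.1 e.2).sum

/-- `p` is a directed path from `a` to `b` in the graph with edge relation `E`. -/
def IsPathOn (E : V → V → Prop) (a b : V) (p : List V) : Prop :=
  p.head? = some a ∧ p.getLast? = some b ∧ p.Chain' E ∧ p.Nodup

/-- The perceived cost of a path with present bias `β`:
the weight of the first edge plus `β` times the total weight of the rest. -/
def perceived (w : V → V → ℝ) (β : ℝ) (p : List V) : ℝ :=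
  match p.zip p.tail with
  | [] => 0
  | e :: es => w e.1 e.2 + β * ((es.map fun e' => w e'.1 e'.2).sum)

/-- The edge `a → b` is a feasible transition (towards target `t`): it is the
first edge of some `a`–`t` path whose perceived cost is minimum among all
`a`–`t` paths. -/
def FeasibleStep (E : V → V → Prop) (w : V → V → ℝ) (β : ℝ) (t : V) (a b : V) : Prop :=
  E a b ∧ ∃ q : List V, IsPathOn E a t (a :: b :: q) ∧
    ∀ r : List V, IsPathOn E a t r → perceived w β (a :: b :: q) ≤ perceived w β r

/-- A feasible `s`–`t` path: every edge on it is a feasible transition from its tail. -/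
def FeasPath (E : V → V → Prop) (w : V → V → ℝ) (β : ℝ) (s t : V) (p : List V) : Prop :=
  IsPathOn E s t p ∧ p.Chain' (FeasibleStep E w β t)

/-- The directed graph is acyclic: no directed cycle. -/
def NoDirCycle (E : V → V → Prop) : Prop := ∀ v, ¬ Relation.TransGen E v v

/-!
Take hubs `3j` (`j ≤ m`) and, between the hubs `3j` and `3j + 3`, two routes: through `3j + 1`,
paying `β·2^j` on the first edge, and through `3j + 2`, paying `2^j` on the second edge. Seen
from the hub `3j`, both routes have perceived cost `β·2^j` plus `β` times the cost of the rest of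
the path, so every transition is feasible. An `s`–`t` path is a binary word `b` of length `m`,
and its cost `β(2^m - 1) + (1 - β)·∑ bⱼ 2^j` determines `b`.

The graph is built on `ℕ` and restricted to `Fin (3m + 1)`; every path into `3m` stays below `3m`,
so the restriction has the same paths.
-/

open Function

section Paths

variable {V : Type*} {E : V → V → Prop} {w : V → V → ℝ} {β : ℝ} {a b t : V}
  {p q : List V}

lemma pathCost_cons_of_head? (h : p.head? = some b) (a : V) :
    pathCost w (a :: p) = w a b + pathCost w p := by
  obtain ⟨p, rfl⟩ := List.head?_eq_some_iff.1 h
  simp [pathCost]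

lemma perceived_cons_of_head? (h : p.head? = some b) (a : V) :
    perceived w β (a :: p) = w a b + β * pathCost w p := by
  obtain ⟨p, rfl⟩ := List.head?_eq_some_iff.1 h
  rfl

lemma isPathOn_self_iff : IsPathOn E a a p ↔ p = [a] := by
  refine ⟨fun ⟨hh, hl, _, hnd⟩ => ?_,
    fun h => h ▸ ⟨rfl, rfl, .singleton a, List.nodup_singleton a⟩⟩
  obtain ⟨q, rfl⟩ := List.head?_eq_some_iff.1 hh
  cases q with
  | nil => rfl
  | cons c q =>
    rw [List.getLast?_cons_cons] at hl
    exact absurd (List.mem_of_getLast? hl) (List.nodup_cons.1 hnd).1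

lemma FeasibleStep.of_forall_perceived_le (hq : q.head? = some b)
    (hpath : IsPathOn E a t (a :: q))
    (hmin : ∀ r, IsPathOn E a t r → perceived w β (a :: q) ≤ perceived w β r) :
    FeasibleStep E w β t a b := by
  obtain ⟨q, rfl⟩ := List.head?_eq_some_iff.1 hq
  exact ⟨(List.isChain_cons_cons.1 hpath.2.2.1).1, q, hpath, hmin⟩

end Paths

section Increasing

variable {α : Type*} [Preorder α] {E : α → α → Prop} {a b x : α} {p : List α}

lemma isPathOn_iff_of_lt (hE : ∀ x y, E x y → x < y) :
    IsPathOn E a b p ↔ p.head? = some a ∧ p.getLast? = some b ∧ p.IsChain E :=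
  ⟨fun h => ⟨h.1, h.2.1, h.2.2.1⟩, fun ⟨hh, hl, hc⟩ =>
    ⟨hh, hl, hc, ((hc.imp fun x y => hE x y).pairwise).imp ne_of_lt⟩⟩

lemma isPathOn_iff_exists_cons (hE : ∀ x y, E x y → x < y) (hab : a ≠ b) :
    IsPathOn E a b p ↔ ∃ c q, p = a :: q ∧ E a c ∧ IsPathOn E c b q := by
  simp only [isPathOn_iff_of_lt hE]
  constructor
  · rintro ⟨hh, hl, hc⟩
    obtain ⟨q, rfl⟩ := List.head?_eq_some_iff.1 hh
    cases q with
    | nil => exact absurd (by simpa using hl) hab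
    | cons c q =>
      rw [List.getLast?_cons_cons] at hl
      exact ⟨c, c :: q, rfl, (List.isChain_cons_cons.1 hc).1, rfl, hl,
        (List.isChain_cons_cons.1 hc).2⟩
  · rintro ⟨c, q, rfl, hac, hh, hl, hc⟩
    obtain ⟨q, rfl⟩ := List.head?_eq_some_iff.1 hh
    exact ⟨rfl, by rwa [List.getLast?_cons_cons], List.isChain_cons_cons.2 ⟨hac, hc⟩⟩

lemma IsPathOn.le_of_mem (hE : ∀ x y, E x y → x < y) (h : IsPathOn E a b p) (hx : x ∈ p) :
    x ≤ b := by
  obtain ⟨q, rfl⟩ := List.getLast?_eq_some_iff.1 h.2.1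
  rcases List.mem_append.1 hx with hx | hx
  · have := List.pairwise_append.1 ((h.2.2.1.imp fun x y => hE x y).pairwise)
    exact (this.2.2 x hx b (List.mem_singleton_self b)).le
  · exact (List.mem_singleton.1 hx).le

lemma noDirCycle_of_lt {V : Type*} {E : V → V → Prop} (f : V → α)
    (hE : ∀ x y, E x y → f x < f y) : NoDirCycle E := fun v hv => by
  have := Relation.TransGen.lift f hE v v hv
  rw [Relation.transGen_eq_self] at this
  exact lt_irrefl _ this

end Increasing

section Comap

variable {V V' : Type*} {φ : V → V'} {E : V' → V' → Prop} {w : V' → V' → ℝ} {β : ℝ}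
  {a b s t : V} {p : List V}

lemma isPathOn_map_iff (hφ : Injective φ) :
    IsPathOn E (φ a) (φ b) (p.map φ) ↔ IsPathOn (fun x y => E (φ x) (φ y)) a b p := by
  refine and_congr (by simp [hφ.eq_iff]) (and_congr (by simp [hφ.eq_iff]) ?_)
  exact and_congr (List.isChain_map φ) (List.nodup_map_iff hφ)

lemma pathCost_map (φ : V → V') (w : V' → V' → ℝ) (p : List V) :
    pathCost w (p.map φ) = pathCost (fun x y => w (φ x) (φ y)) p := by
  simp [pathCost, ← List.map_tail, List.zip_map, List.map_map, Function.comp_def]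

lemma perceived_map (φ : V → V') (w : V' → V' → ℝ) (β : ℝ) (p : List V) :
    perceived w β (p.map φ) = perceived (fun x y => w (φ x) (φ y)) β p := by
  match p with
  | [] | [_] => rfl
  | a :: b :: p => exact congrArg (_ + β * ·) (pathCost_map φ w (b :: p))

lemma setOf_isPathOn_comap (hφ : Injective φ) :
    {p | IsPathOn (fun x y => E (φ x) (φ y)) a b p} =
      List.map φ ⁻¹' {q | IsPathOn E (φ a) (φ b) q} := by
  ext p
  exact (isPathOn_map_iff hφ).symm

lemma finite_setOf_isPathOn_comap (hφ : Injective φ)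
    (h : {q | IsPathOn E (φ a) (φ b) q}.Finite) :
    {p | IsPathOn (fun x y => E (φ x) (φ y)) a b p}.Finite := by
  rw [setOf_isPathOn_comap hφ]
  exact h.preimage (List.map_injective_iff.2 hφ).injOn

lemma injOn_pathCost_comap (hφ : Injective φ)
    (h : Set.InjOn (pathCost w) {q | IsPathOn E (φ a) (φ b) q}) :
    Set.InjOn (pathCost fun x y => w (φ x) (φ y))
      {p | IsPathOn (fun x y => E (φ x) (φ y)) a b p} := by
  intro p hp p' hp' hcost
  rw [← pathCost_map φ w p, ← pathCost_map φ w p'] at hcost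
  exact List.map_injective_iff.2 hφ
    (h ((isPathOn_map_iff hφ).2 hp) ((isPathOn_map_iff hφ).2 hp') hcost)

variable (hφ : Injective φ)
  (hrange : ∀ x q, IsPathOn E x (φ t) q → ∀ y ∈ q, y ∈ Set.range φ)
include hφ hrange

lemma FeasibleStep.comap (h : FeasibleStep E w β (φ t) (φ a) (φ b)) :
    FeasibleStep (fun x y => E (φ x) (φ y)) (fun x y => w (φ x) (φ y)) β t a b := by
  obtain ⟨hab, q, hq, hmin⟩ := h
  obtain ⟨q, rfl⟩ : q ∈ Set.range (List.map φ) := by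
    rw [Set.range_list_map]
    exact fun y hy => hrange _ _ hq y (by simp [hy])
  refine ⟨hab, q, (isPathOn_map_iff (p := a :: b :: q) hφ).1 hq, fun r hr => ?_⟩
  have key := hmin _ ((isPathOn_map_iff hφ).2 hr)
  rwa [← List.map_cons, ← List.map_cons, perceived_map, perceived_map] at key

lemma FeasPath.comap (hp : IsPathOn (fun x y => E (φ x) (φ y)) s t p)
    (hfeas : (p.map φ).IsChain (FeasibleStep E w β (φ t))) :
    FeasPath (fun x y => E (φ x) (φ y)) (fun x y => w (φ x) (φ y)) β s t p :=
  ⟨hp, ((List.isChain_map φ).1 hfeas).imp fun _ _ => FeasibleStep.comap hφ hrange⟩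

lemma ncard_setOf_isPathOn_comap :
    {p | IsPathOn (fun x y => E (φ x) (φ y)) s t p}.ncard =
      {q | IsPathOn E (φ s) (φ t) q}.ncard := by
  rw [setOf_isPathOn_comap hφ,
    Set.ncard_preimage_of_injective_subset_range (List.map_injective_iff.2 hφ)]
  intro q hq
  rw [Set.range_list_map]
  exact hrange _ q hq

end Comap

namespace Ladder

def adj (x y : ℕ) : Prop := if x % 3 = 0 then y = x + 1 ∨ y = x + 2 else y = x / 3 * 3 + 3

def weight (β : ℝ) (x y : ℕ) : ℝ :=
  if x % 3 = 0 then (if y = x + 1 then β * 2 ^ (x / 3) else 0)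
  else if x % 3 = 2 then 2 ^ (x / 3) else 0

def midVertex (j : ℕ) (b : Bool) : ℕ := 3 * j + if b then 2 else 1

def path : ℕ → List Bool → List ℕ
  | j, [] => [3 * j]
  | j, b :: bs => 3 * j :: midVertex j b :: path (j + 1) bs

def bitsVal (bs : List Bool) : ℕ := Nat.ofDigits 2 (bs.map Bool.toNat)

variable {β : ℝ} {j n m : ℕ} {b : Bool} {bs : List Bool} {t y : ℕ} {p : List ℕ}

lemma adj_lt {x y : ℕ} (h : adj x y) : x < y := by
  unfold adj at h; split at h <;> omega

lemma adj_hub_iff : adj (3 * j) y ↔ ∃ b, y = midVertex j b := by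
  simp only [adj, midVertex, Nat.mul_mod_right, if_true]
  constructor
  · rintro (rfl | rfl)
    exacts [⟨false, rfl⟩, ⟨true, rfl⟩]
  · rintro ⟨_ | _, rfl⟩ <;> simp

lemma adj_midVertex_iff : adj (midVertex j b) y ↔ y = 3 * (j + 1) := by
  unfold adj midVertex; cases b <;> simp <;> omega

lemma weight_hub_midVertex : weight β (3 * j) (midVertex j b) = if b then 0 else β * 2 ^ j := by
  cases b <;> simp [weight, midVertex]

lemma weight_midVertex : weight β (midVertex j b) y = if b then 2 ^ j else 0 := by
  cases b <;> simp [weight, midVertex, show (3 * j + 2) / 3 = j by omega]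

lemma weight_nonneg (hβ : 0 ≤ β) (x y : ℕ) : 0 ≤ weight β x y := by
  unfold weight; split_ifs <;> positivity

lemma path_head? (j : ℕ) (bs : List Bool) : (path j bs).head? = some (3 * j) := by
  cases bs <;> rfl

lemma path_injective (j : ℕ) : Injective (path j) := by
  intro bs cs h
  induction bs generalizing j cs with
  | nil => cases cs <;> simp_all [path]
  | cons b bs ih =>
    cases cs with
    | nil => simp [path] at h
    | cons c cs =>
      simp only [path, List.cons.injEq, true_and] at h
      have hbc : b = c := by cases b <;> cases c <;> simp_all [midVertex]
      rw [hbc, ih (j + 1) h.2]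

lemma isPathOn_midVertex_iff (ht : t % 3 = 0) :
    IsPathOn adj (midVertex j b) t p ↔
      ∃ q, p = midVertex j b :: q ∧ IsPathOn adj (3 * (j + 1)) t q := by
  have hne : midVertex j b ≠ t := by unfold midVertex; cases b <;> simp <;> omega
  simp only [isPathOn_iff_exists_cons (fun _ _ => adj_lt) hne, adj_midVertex_iff]
  constructor
  · rintro ⟨c, q, rfl, rfl, hq⟩
    exact ⟨q, rfl, hq⟩
  · rintro ⟨q, rfl, hq⟩
    exact ⟨_, q, rfl, rfl, hq⟩

lemma isPathOn_hub_iff (ht : t % 3 = 0) (hne : 3 * j ≠ t) :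
    IsPathOn adj (3 * j) t p ↔
      ∃ b q, p = 3 * j :: midVertex j b :: q ∧ IsPathOn adj (3 * (j + 1)) t q := by
  rw [isPathOn_iff_exists_cons (fun _ _ => adj_lt) hne]
  constructor
  · rintro ⟨_, _, rfl, hc, hpath⟩
    obtain ⟨b, rfl⟩ := adj_hub_iff.1 hc
    obtain ⟨q, rfl, hq⟩ := (isPathOn_midVertex_iff ht).1 hpath
    exact ⟨b, q, rfl, hq⟩
  · rintro ⟨b, q, rfl, hq⟩
    exact ⟨_, _, rfl, adj_hub_iff.2 ⟨b, rfl⟩,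
      (isPathOn_midVertex_iff ht).2 ⟨q, rfl, hq⟩⟩

lemma isPathOn_path_iff :
    IsPathOn adj (3 * j) (3 * (j + n)) p ↔
      ∃ bs : List Bool, bs.length = n ∧ path j bs = p := by
  induction n generalizing j p with
  | zero => simp [isPathOn_self_iff, List.length_eq_zero_iff, path, eq_comm]
  | succ n ih =>
    rw [isPathOn_hub_iff (by omega) (by omega)]
    simp only [show j + (n + 1) = j + 1 + n by omega, ih]
    constructor
    · rintro ⟨b, _, rfl, bs, hbs, rfl⟩
      exact ⟨b :: bs, by simp [hbs], rfl⟩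
    · rintro ⟨_ | ⟨b, bs⟩, hbs, rfl⟩
      · simp at hbs
      · exact ⟨b, _, rfl, bs, by simpa using hbs, rfl⟩

lemma pathCost_path (β : ℝ) (j : ℕ) (bs : List Bool) :
    pathCost (weight β) (path j bs) =
      2 ^ j * (β * (2 ^ bs.length - 1) + (1 - β) * bitsVal bs) := by
  induction bs generalizing j with
  | nil => simp [path, pathCost, bitsVal]
  | cons b bs ih =>
    rw [path, pathCost_cons_of_head? rfl, pathCost_cons_of_head? (path_head? _ _), ih,
      weight_hub_midVertex, weight_midVertex]
    cases b <;> simp [bitsVal, Nat.ofDigits_cons] <;> ring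

lemma bitsVal_replicate_false (n : ℕ) : bitsVal (List.replicate n false) = 0 := by
  simp [bitsVal]

lemma bitsVal_inj {cs : List Bool} (hlen : bs.length = cs.length)
    (h : bitsVal bs = bitsVal cs) : bs = cs :=
  List.map_injective_iff.2 (by decide : Injective Bool.toNat) <|
    Nat.ofDigits_inj_of_len_eq one_lt_two (by simpa using hlen)
      (fun _ hd => by obtain ⟨b, -, rfl⟩ := List.mem_map.1 hd; exact b.toNat_lt)
      (fun _ hd => by obtain ⟨b, -, rfl⟩ := List.mem_map.1 hd; exact b.toNat_lt) h

lemma pathCost_path_replicate_false_le (hβ : β ≤ 1) (hbs : bs.length = n) :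
    pathCost (weight β) (path j (List.replicate n false)) ≤
      pathCost (weight β) (path j bs) := by
  rw [pathCost_path, pathCost_path, bitsVal_replicate_false, List.length_replicate, hbs]
  have : 0 ≤ (1 - β) * (bitsVal bs : ℝ) := mul_nonneg (by linarith) (Nat.cast_nonneg _)
  gcongr
  linarith

lemma perceived_path_cons (β : ℝ) (j : ℕ) (b : Bool) (bs : List Bool) :
    perceived (weight β) β (path j (b :: bs)) =
      β * 2 ^ j + β * pathCost (weight β) (path (j + 1) bs) := by
  rw [path, perceived_cons_of_head? rfl, pathCost_cons_of_head? (path_head? _ _),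
    weight_hub_midVertex, weight_midVertex]
  cases b <;> simp [mul_add]

lemma feasibleStep_hub (hβ0 : 0 ≤ β) (hβ1 : β ≤ 1) :
    FeasibleStep adj (weight β) β (3 * (j + 1 + n)) (3 * j) (midVertex j b) := by
  have hpaths : ∀ r, IsPathOn adj (3 * j) (3 * (j + 1 + n)) r ↔
      ∃ cs : List Bool, cs.length = n + 1 ∧ path j cs = r := fun r => by
    rw [show j + 1 + n = j + (n + 1) by omega]
    exact isPathOn_path_iff
  refine .of_forall_perceived_le
    (q := midVertex j b :: path (j + 1) (List.replicate n false)) rfl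
    ((hpaths _).2 ⟨b :: List.replicate n false, by simp, rfl⟩) fun r hr => ?_
  obtain ⟨_ | ⟨c, cs⟩, hcs, rfl⟩ := (hpaths r).1 hr
  · simp at hcs
  rw [← path, perceived_path_cons, perceived_path_cons]
  gcongr
  exact pathCost_path_replicate_false_le hβ1 (by simpa using hcs)

lemma feasibleStep_midVertex (hβ0 : 0 ≤ β) (hβ1 : β ≤ 1) :
    FeasibleStep adj (weight β) β (3 * (j + 1 + n)) (midVertex j b) (3 * (j + 1)) := by
  have ht : 3 * (j + 1 + n) % 3 = 0 := by omega
  refine .of_forall_perceived_le (q := path (j + 1) (List.replicate n false)) (path_head? _ _)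
    ((isPathOn_midVertex_iff ht).2 ⟨_, rfl, isPathOn_path_iff.2 ⟨_, by simp, rfl⟩⟩)
    fun r hr => ?_
  obtain ⟨q, rfl, hq⟩ := (isPathOn_midVertex_iff ht).1 hr
  obtain ⟨cs, hcs, rfl⟩ := isPathOn_path_iff.1 hq
  rw [perceived_cons_of_head? (path_head? _ _), perceived_cons_of_head? (path_head? _ _)]
  gcongr
  exact pathCost_path_replicate_false_le hβ1 hcs

lemma isChain_feasibleStep_path (hβ0 : 0 ≤ β) (hβ1 : β ≤ 1) (j : ℕ) (bs : List Bool) :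
    (path j bs).IsChain (FeasibleStep adj (weight β) β (3 * (j + bs.length))) := by
  induction bs generalizing j with
  | nil => exact .singleton _
  | cons b bs ih =>
    rw [List.length_cons, show j + (bs.length + 1) = j + 1 + bs.length by omega]
    refine .cons (.cons (ih (j + 1)) ?_) (by simpa using feasibleStep_hub hβ0 hβ1)
    simpa [path_head?] using feasibleStep_midVertex hβ0 hβ1

lemma setOf_isPathOn_eq_image_path (m : ℕ) :
    {p | IsPathOn adj 0 (3 * m) p} = path 0 '' {bs | bs.length = m} := by
  ext p
  simpa using isPathOn_path_iff (j := 0) (n := m) (p := p)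

lemma injOn_pathCost (hβ : β ≠ 1) (m : ℕ) :
    Set.InjOn (pathCost (weight β)) {p | IsPathOn adj 0 (3 * m) p} := by
  rw [setOf_isPathOn_eq_image_path]
  rintro _ ⟨bs, hbs, rfl⟩ _ ⟨cs, hcs, rfl⟩ h
  rw [pathCost_path, pathCost_path, hbs.out, hcs.out] at h
  have h1β : (1 - β) ≠ 0 := sub_ne_zero.2 hβ.symm
  have : (bitsVal bs : ℝ) = bitsVal cs := by
    simpa [h1β] using h
  rw [bitsVal_inj (hbs.out.trans hcs.out.symm) (by exact_mod_cast this)]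

lemma ncard_setOf_isPathOn (m : ℕ) : {p | IsPathOn adj 0 (3 * m) p}.ncard = 2 ^ m := by
  rw [setOf_isPathOn_eq_image_path, Set.ncard_image_of_injective _ (path_injective 0),
    ← Nat.card_coe_set_eq]
  exact (Nat.card_eq_fintype_card (α := List.Vector Bool m)).trans (by simp)

lemma isChain_feasibleStep_of_isPathOn (hβ0 : 0 ≤ β) (hβ1 : β ≤ 1)
    (hp : IsPathOn adj 0 (3 * m) p) : p.IsChain (FeasibleStep adj (weight β) β (3 * m)) := by
  obtain ⟨bs, rfl, rfl⟩ := (isPathOn_path_iff (j := 0) (n := m)).1 (by simpa using hp)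
  simpa using isChain_feasibleStep_path hβ0 hβ1 0 bs

lemma finite_setOf_isPathOn (m : ℕ) : {p | IsPathOn adj 0 (3 * m) p}.Finite := by
  rw [setOf_isPathOn_eq_image_path]
  exact (List.finite_length_eq Bool m).image _

lemma mem_range_val_of_isPathOn {x : ℕ} (hp : IsPathOn adj x (3 * m) p) (hy : y ∈ p) :
    y ∈ Set.range (Fin.val : Fin (3 * m + 1) → ℕ) := by
  rw [Fin.range_val]
  exact Nat.lt_succ_of_le (hp.le_of_mem (fun _ _ => adj_lt) hy)

end Ladder

theorem stmt0_general (m : ℕ) (β : ℝ) (hβ0 : 0 < β) (hβ1 : β < 1) :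
    ∃ (V : Type) (_ : Fintype V) (E : V → V → Prop) (w : V → V → ℝ) (s t : V),
      NoDirCycle E ∧
      Fintype.card V = 3 * m + 1 ∧
      (∀ a b, E a b → 0 ≤ w a b) ∧
      (∀ p, IsPathOn E s t p → FeasPath E w β s t p) ∧
      {p : List V | IsPathOn E s t p}.Finite ∧
      {p : List V | IsPathOn E s t p}.ncard = 2 ^ m ∧
      Set.InjOn (pathCost w) {p : List V | IsPathOn E s t p} := by
  have hrange (x : ℕ) (q : List ℕ) (hq : IsPathOn Ladder.adj x (3 * m) q) :
      ∀ y ∈ q, y ∈ Set.range (Fin.val : Fin (3 * m + 1) → ℕ) :=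
    fun _ => Ladder.mem_range_val_of_isPathOn hq
  refine ⟨Fin (3 * m + 1), inferInstance, fun a b => Ladder.adj a b,
    fun a b => Ladder.weight β a b,
    0, Fin.last (3 * m), noDirCycle_of_lt Fin.val fun _ _ => Ladder.adj_lt, Fintype.card_fin _,
    fun _ _ _ => Ladder.weight_nonneg hβ0.le _ _, fun p hp => ?_,
    finite_setOf_isPathOn_comap Fin.val_injective (Ladder.finite_setOf_isPathOn m),
    (ncard_setOf_isPathOn_comap Fin.val_injective hrange).trans (Ladder.ncard_setOf_isPathOn m),
    injOn_pathCost_comap Fin.val_injective (Ladder.injOn_pathCost hβ1.ne m)⟩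
  exact FeasPath.comap Fin.val_injective hrange hp
    (Ladder.isChain_feasibleStep_of_isPathOn hβ0.le hβ1.le
      ((isPathOn_map_iff Fin.val_injective).2 hp))

/-- For every `m ≥ 1` and present bias `0 < β < 1` there is a
time-inconsistent planning model on exactly `3m+1` vertices, with nonnegative
edge weights, in which every directed `s`–`t` path is feasible, there are
exactly `2^m` directed `s`–`t` paths, and their costs are pairwise distinct. -/
theorem stmt0 (m : ℕ) (hm : 1 ≤ m) (β : ℝ) (hβ0 : 0 < β) (hβ1 : β < 1) :
    ∃ (V : Type) (_ : Fintype V) (E : V → V → Prop) (w : V → V → ℝ) (s t : V),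
      NoDirCycle E ∧
      Fintype.card V = 3 * m + 1 ∧
      (∀ a b, E a b → 0 ≤ w a b) ∧
      (∀ p, IsPathOn E s t p → FeasPath E w β s t p) ∧
      {p : List V | IsPathOn E s t p}.Finite ∧
      {p : List V | IsPathOn E s t p}.ncard = 2 ^ m ∧
      Set.InjOn (pathCost w) {p : List V | IsPathOn E s t p} :=
  stmt0_general m β hβ0 hβ1
end

section
/- In the diamond-chain graph built from positive integers s₁, …, s_n, an integer W > max_i s_i, and a real β with 0 < β < 1, every edge is a feasible transition; consequently, every directed s–t path of the diamond-chain graph is feasible. -/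
/-!
Common definitions for time-inconsistent planning models (Kleinberg–Oren).
A task graph is given by a finite vertex type `V`, an edge relation
`E : V → V → Prop` and edge weights `w : V → V → ℝ`.  A directed path is
represented by the list of its vertices (nonempty, consecutive vertices joined
by edges, no repeated vertices).
-/

variable {V : Type*}

/-- Vertices of the diamond-chain graph built on `n` diamonds: `v i` for
`i ∈ {0,…,n}` and, for each diamond `i ∈ {1,…,n}` (indexed by `Fin n`,
diamond `i` ↔ index `i-1`), the two middle vertices `u (i-1) true = u_i`
(upper branch) and `u (i-1) false = u'_i` (lower branch). -/
inductive DV (n : ℕ) : Type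
  | v (i : Fin (n + 1))
  | u (i : Fin n) (upper : Bool)

/-- Edges of the diamond-chain graph:
`v_{i-1} → u_i`, `v_{i-1} → u'_i`, `u_i → v_i`, `u'_i → v_i`. -/
def DE (n : ℕ) : DV n → DV n → Prop
  | DV.v j, DV.u i _ => (j : ℕ) = (i : ℕ)
  | DV.u i _, DV.v j => (j : ℕ) = (i : ℕ) + 1
  | _, _ => False

/-- Edge weights of the diamond-chain graph built from the integers `sv i`
(`s_i` of the paper), `W` and present bias `β`:
`v_{i-1}→u_i` has weight `s_i`, `u_i→v_i` has weight `(W-s_i)/β`,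
`v_{i-1}→u'_i` has weight `-s_i`, and `u'_i→v_i` has weight `(W+s_i)/β`. -/
noncomputable def Dw (n : ℕ) (sv : Fin n → ℤ) (W : ℤ) (β : ℝ) : DV n → DV n → ℝ
  | DV.v _, DV.u i true => (sv i : ℝ)
  | DV.v _, DV.u i false => -(sv i : ℝ)
  | DV.u i true, DV.v _ => ((W : ℝ) - (sv i : ℝ)) / β
  | DV.u i false, DV.v _ => ((W : ℝ) + (sv i : ℝ)) / β
  | _, _ => 0

/-!
Let `φ x` be the true cost of the path from `x` that takes the upper branch of every remaining
diamond. As `s_i ≥ 0` and `β ≤ 1`, no edge `x → y` has `w x y + φ y < φ x`, so `φ x` is the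
cheapest true cost from `x` to `t`, and the perceived cost of a path starting with `x → y` is at
least `w x y + β φ y`, attained by following `x → y` with the upper path. From `v_{i-1}` both
branches give `W + β φ(v_i)`, and from `u_i` or `u'_i` there is only one edge, so every edge
is a feasible transition.
-/

section Potential

variable {E : V → V → Prop} {w : V → V → ℝ} {β : ℝ} {φ : V → ℝ} {t : V}

theorem pathCost_singleton (a : V) : pathCost w [a] = 0 := by
  simp [pathCost]

theorem pathCost_cons_cons (a b : V) (l : List V) :
    pathCost w (a :: b :: l) = w a b + pathCost w (b :: l) := by
  simp [pathCost]

theorem perceived_cons_cons (a b : V) (l : List V) :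
    perceived w β (a :: b :: l) = w a b + β * pathCost w (b :: l) := by
  simp [perceived, pathCost]

theorem IsPathOn.tail {a b : V} {l : List V} (h : IsPathOn E a t (a :: b :: l)) :
    IsPathOn E b t (b :: l) :=
  ⟨rfl, List.getLast?_cons_cons ▸ h.2.1, h.2.2.1.tail, (List.nodup_cons.mp h.2.2.2).2⟩

theorem IsPathOn.ne_of_cons_cons {a b : V} {l : List V} (h : IsPathOn E a t (a :: b :: l)) :
    a ≠ t := by
  rintro rfl
  have hmem : a ∈ b :: l := List.mem_of_getLast? (List.getLast?_cons_cons ▸ h.2.1)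
  exact (List.nodup_cons.mp h.2.2.2).1 hmem

theorem le_pathCost_of_potential (hφt : φ t = 0) (hpot : ∀ x y, E x y → φ x ≤ w x y + φ y) :
    ∀ (l : List V) (x : V), List.IsChain E (x :: l) → (x :: l).getLast? = some t →
      φ x ≤ pathCost w (x :: l)
  | [], x, _, hlast => by
    obtain rfl : x = t := Option.some.inj hlast
    simp [hφt, pathCost_singleton]
  | y :: l, x, hchain, hlast => by
    obtain ⟨hxy, hchain⟩ := List.isChain_cons_cons.mp hchain
    have := le_pathCost_of_potential hφt hpot l y hchain (List.getLast?_cons_cons ▸ hlast)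
    rw [pathCost_cons_cons]
    linarith [hpot x y hxy]

theorem feasibleStep_of_potential (hβ : 0 ≤ β) (hφt : φ t = 0)
    (hpot : ∀ x y, E x y → φ x ≤ w x y + φ y) {a b : V} {q : List V}
    (hpath : IsPathOn E a t (a :: b :: q)) (htight : pathCost w (b :: q) = φ b)
    (hmin : ∀ c, E a c → w a b + β * φ b ≤ w a c + β * φ c) :
    FeasibleStep E w β t a b := by
  refine ⟨(List.isChain_cons_cons.mp hpath.2.2.1).1, q, hpath, fun r hr => ?_⟩
  obtain ⟨r, rfl⟩ := List.head?_eq_some_iff.mp hr.1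
  rcases r with _ | ⟨c, l⟩
  · exact absurd (Option.some.inj hr.2.1) hpath.ne_of_cons_cons
  have hc := hr.tail
  have hlow := le_pathCost_of_potential hφt hpot l c hc.2.2.1 hc.2.1
  calc perceived w β (a :: b :: q) = w a b + β * φ b := by rw [perceived_cons_cons, htight]
    _ ≤ w a c + β * φ c := hmin c (List.isChain_cons_cons.mp hr.2.2.1).1
    _ ≤ perceived w β (a :: c :: l) := by
      rw [perceived_cons_cons]; gcongr

theorem feasPath_of_forall_feasibleStep {s : V} {p : List V}
    (hstep : ∀ a b, E a b → FeasibleStep E w β t a b) (hp : IsPathOn E s t p) :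
    FeasPath E w β s t p :=
  ⟨hp, hp.2.2.1.imp hstep⟩

end Potential

namespace DV

variable {n : ℕ}

def rank : DV n → ℕ
  | v j => 2 * j
  | u i _ => 2 * i + 1

theorem rank_lt_of_DE : ∀ {x y : DV n}, DE n x y → x.rank < y.rank
  | v _, u _ _, h => by simp only [DE] at h; simp only [rank]; omega
  | u _ _, v _, h => by simp only [DE] at h; simp only [rank]; omega
  | v _, v _, h => h.elim
  | u _ _, u _ _, h => h.elim

theorem nodup_of_isChain {l : List (DV n)} (h : l.IsChain (DE n)) : l.Nodup := by
  have hrank : (l.map rank).IsChain (· < ·) :=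
    List.isChain_map _ |>.mpr (h.imp fun _ _ => rank_lt_of_DE)
  exact hrank.pairwise.nodup.of_map rank

def upperTail : Fin (n + 1) → List (DV n) :=
  Fin.reverseInduction [] fun i tail => u i true :: v i.succ :: tail

def upperPath : DV n → List (DV n)
  | v j => v j :: upperTail j
  | u i b => u i b :: v i.succ :: upperTail i.succ

theorem upperPath_eq_cons (x : DV n) : upperPath x = x :: (upperPath x).tail := by
  cases x <;> rfl

theorem upperPath_v_last : upperPath (v (Fin.last n)) = [v (Fin.last n)] := by
  simp [upperPath, upperTail]

theorem upperPath_v_castSucc (i : Fin n) :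
    upperPath (v i.castSucc) = v i.castSucc :: u i true :: upperPath (v i.succ) := by
  simp [upperPath, upperTail]

theorem upperPath_u (i : Fin n) (b : Bool) : upperPath (u i b) = u i b :: upperPath (v i.succ) :=
  rfl

theorem isChain_upperPath_v (j : Fin (n + 1)) : (upperPath (v j)).IsChain (DE n) := by
  induction j using Fin.reverseInduction with
  | last => simp [upperPath_v_last]
  | cast i ih =>
    rw [upperPath_v_castSucc, upperPath_eq_cons]
    refine .cons_cons (by simp [DE]) (.cons_cons (by simp [DE]) ?_)
    rwa [← upperPath_eq_cons]

theorem getLast?_upperPath_v (j : Fin (n + 1)) :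
    (upperPath (v j)).getLast? = some (v (Fin.last n)) := by
  induction j using Fin.reverseInduction with
  | last => simp [upperPath_v_last]
  | cast i ih =>
    rwa [upperPath_v_castSucc, upperPath_eq_cons, List.getLast?_cons_cons,
      List.getLast?_cons_cons, ← upperPath_eq_cons]

theorem isChain_upperPath : ∀ x : DV n, (upperPath x).IsChain (DE n)
  | v j => isChain_upperPath_v j
  | u i _ => .cons_cons (by simp [DE]) (isChain_upperPath_v i.succ)

theorem getLast?_upperPath : ∀ x : DV n, (upperPath x).getLast? = some (v (Fin.last n))
  | v j => getLast?_upperPath_v j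
  | u i _ => List.getLast?_cons_cons.trans (getLast?_upperPath_v i.succ)

theorem isPathOn_cons_upperPath {a b : DV n} (h : DE n a b) :
    IsPathOn (DE n) a (v (Fin.last n)) (a :: upperPath b) := by
  have hchain : (a :: upperPath b).IsChain (DE n) := by
    rw [upperPath_eq_cons]
    exact .cons_cons h (upperPath_eq_cons b ▸ isChain_upperPath b)
  refine ⟨rfl, ?_, hchain, nodup_of_isChain hchain⟩
  rw [upperPath_eq_cons, List.getLast?_cons_cons, ← upperPath_eq_cons]
  exact getLast?_upperPath b

variable {sv : Fin n → ℤ} {W : ℤ} {β : ℝ}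

variable (sv W β) in
noncomputable def potential (x : DV n) : ℝ :=
  pathCost (Dw n sv W β) (upperPath x)

theorem potential_v_last : potential sv W β (v (Fin.last n)) = 0 := by
  rw [potential, upperPath_v_last, pathCost_singleton]

theorem potential_v_castSucc (i : Fin n) :
    potential sv W β (v i.castSucc) =
      sv i + (W - sv i) / β + potential sv W β (v i.succ) := by
  rw [potential, upperPath_v_castSucc, pathCost_cons_cons, upperPath_eq_cons (v i.succ),
    pathCost_cons_cons, ← upperPath_eq_cons, ← potential]
  simp only [Dw]; ring

theorem potential_u (i : Fin n) (b : Bool) :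
    potential sv W β (u i b) = Dw n sv W β (u i b) (v i.succ) + potential sv W β (v i.succ) :=
  pathCost_cons_cons _ _ _

/-- Taking the lower branch of a diamond costs `2 s_i (1/β - 1) ≥ 0` more than the upper one. -/
theorem potential_le_of_DE (hs : ∀ i, 0 ≤ sv i) (hβ0 : 0 < β) (hβ1 : β ≤ 1) :
    ∀ {x y : DV n}, DE n x y → potential sv W β x ≤ Dw n sv W β x y + potential sv W β y
  | v j, u i b, h => by
    obtain rfl : j = i.castSucc := Fin.ext h
    have hsi : (sv i : ℝ) ≤ sv i / β := le_div_self (by exact_mod_cast hs i) hβ0 hβ1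
    rw [potential_v_castSucc, potential_u]
    cases b <;> simp only [Dw, add_div, sub_div] <;> linarith
  | u i b, v j, h => by
    obtain rfl : j = i.succ := Fin.ext h
    rw [potential_u]
  | v _, v _, h => h.elim
  | u _ _, u _ _, h => h.elim

/-- Present bias makes both branches of a diamond look alike: each is perceived to cost `W`. -/
theorem Dw_add_mul_potential (hβ : β ≠ 0) (j : Fin (n + 1)) (i : Fin n) (b : Bool) :
    Dw n sv W β (v j) (u i b) + β * potential sv W β (u i b) =
      W + β * potential sv W β (v i.succ) := by
  rw [potential_u]
  cases b <;> simp only [Dw] <;> field_simp <;> ring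

theorem feasibleStep_of_DE (hs : ∀ i, 0 ≤ sv i) (hβ0 : 0 < β) (hβ1 : β ≤ 1) {a b : DV n}
    (h : DE n a b) : FeasibleStep (DE n) (Dw n sv W β) β (v (Fin.last n)) a b := by
  refine feasibleStep_of_potential hβ0.le potential_v_last
    (fun _ _ => potential_le_of_DE hs hβ0 hβ1) (q := (upperPath b).tail)
    (upperPath_eq_cons b ▸ isPathOn_cons_upperPath h) (by rw [← upperPath_eq_cons]; rfl)
    fun c hc => ?_
  match a, b, c, h, hc with
  | v j, u i b, u i' b', h, hc =>
    obtain rfl : i' = i := Fin.castSucc_injective _ (Fin.ext (hc.symm.trans h))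
    rw [Dw_add_mul_potential hβ0.ne', Dw_add_mul_potential hβ0.ne']
  | u i _, v j, v j', h, hc =>
    obtain rfl : j' = j := Fin.ext (hc.trans h.symm)
    exact le_rfl

end DV

theorem stmt3_general (n : ℕ) (sv : Fin n → ℤ) (hs : ∀ i, 0 < sv i)
    (W : ℤ) (β : ℝ) (hβ0 : 0 < β) (hβ1 : β < 1) :
    (∀ a b, DE n a b → FeasibleStep (DE n) (Dw n sv W β) β (DV.v (Fin.last n)) a b) ∧
    (∀ p, IsPathOn (DE n) (DV.v 0) (DV.v (Fin.last n)) p →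
        FeasPath (DE n) (Dw n sv W β) β (DV.v 0) (DV.v (Fin.last n)) p) := by
  have hstep : ∀ a b, DE n a b → FeasibleStep (DE n) (Dw n sv W β) β (DV.v (Fin.last n)) a b :=
    fun _ _ => DV.feasibleStep_of_DE (fun i => (hs i).le) hβ0 hβ1.le
  exact ⟨hstep, fun _ => feasPath_of_forall_feasibleStep hstep⟩

/-- In the diamond-chain graph built from positive integers
`s₁,…,s_n`, an integer `W > max_i s_i` and `0 < β < 1`, every edge is a
feasible transition; consequently every directed `s`–`t` path is feasible. -/
theorem stmt3 (n : ℕ) (sv : Fin n → ℤ) (hs : ∀ i, 0 < sv i)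
    (W : ℤ) (hW : ∀ i, sv i < W) (β : ℝ) (hβ0 : 0 < β) (hβ1 : β < 1) :
    (∀ a b, DE n a b → FeasibleStep (DE n) (Dw n sv W β) β (DV.v (Fin.last n)) a b) ∧
    (∀ p, IsPathOn (DE n) (DV.v 0) (DV.v (Fin.last n)) p →
        FeasPath (DE n) (Dw n sv W β) β (DV.v 0) (DV.v (Fin.last n)) p) :=
  stmt3_general n sv hs W β hβ0 hβ1
end

section
/- Let G be a finite directed acyclic graph with vertices s and t, and let F be a set of k directed edges of G such that after deleting the edges of F the underlying undirected graph of G contains no cycle (is a forest). Then the number of directed s–t paths in G is at most 2^k. -/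
/-!
Common definitions for time-inconsistent planning models (Kleinberg–Oren).
A task graph is given by a finite vertex type `V`, an edge relation
`E : V → V → Prop` and edge weights `w : V → V → ℝ`.  A directed path is
represented by the list of its vertices (nonempty, consecutive vertices joined
by edges, no repeated vertices).
-/

variable {V : Type*}

/-!
Send each `s`–`t` path to the set of `F`-edges it uses; it suffices to show this map is injective.
Along a path in a DAG, the `F`-edges are traversed in reachability order, so their set determines
their sequence. Between two consecutive `F`-edges the path runs in the forest obtained by deleting
`F`, where a path between two given vertices is unique; hence the sequence determines the path.
-/

namespace List

variable {α : Type*}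

@[simp] lemma consecutivePairs_singleton (a : α) : [a].consecutivePairs = [] := rfl

@[simp] lemma consecutivePairs_cons_cons (a b : α) (l : List α) :
    (a :: b :: l).consecutivePairs = (a, b) :: (b :: l).consecutivePairs := rfl

lemma isChain_iff_forall_mem_consecutivePairs {R : α → α → Prop} :
    ∀ {l : List α}, l.IsChain R ↔ ∀ e ∈ l.consecutivePairs, R e.1 e.2
  | [] | [_] => by simp
  | a :: b :: l => by
    simp [isChain_cons_cons, isChain_iff_forall_mem_consecutivePairs (l := b :: l)]

lemma Pairwise.consecutivePairs {R : α → α → Prop} {l : List α} (h : l.Pairwise R) :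
    l.consecutivePairs.Pairwise fun e e' => R e.1 e'.1 := by
  suffices ∀ m : List α, (l.zip m).Pairwise fun e e' => R e.1 e'.1 from this _
  induction h with
  | nil => simp
  | @cons a l hRa _ ih =>
    rintro (_ | ⟨b, m⟩)
    · simp
    · exact pairwise_cons.2 ⟨fun e he => hRa _ (of_mem_zip he).1, ih m⟩

lemma IsChain.pairwise_transGen_consecutivePairs {R : α → α → Prop} {l : List α}
    (h : l.IsChain R) : l.consecutivePairs.Pairwise fun e e' => Relation.TransGen R e.1 e'.1 :=
  (h.imp fun _ _ => .single).pairwise.consecutivePairs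

lemma exists_of_consecutivePairs_eq_append_cons {x y : α} :
    ∀ {l : List α} {l₁ l₂ : List (α × α)}, l.consecutivePairs = l₁ ++ (x, y) :: l₂ →
      ∃ u v, l = u ++ x :: y :: v ∧ (u ++ [x]).consecutivePairs = l₁ ∧
        (y :: v).consecutivePairs = l₂
  | [], _, _, h | [_], _, _, h => by simp at h
  | a :: b :: l, [], l₂, h => by
    obtain ⟨⟨rfl, rfl⟩, rfl⟩ := by simpa using h
    exact ⟨[], l, by simp⟩
  | a :: b :: l, e :: l₁, l₂, h => by
    obtain ⟨rfl, htail⟩ := by simpa using h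
    obtain ⟨u, v, hbl, rfl, rfl⟩ := exists_of_consecutivePairs_eq_append_cons htail
    refine ⟨a :: u, v, by simp [hbl], ?_, rfl⟩
    rcases u with _ | ⟨c, u⟩ <;> simp_all

end List

section Paths

variable {V : Type*} {E : V → V → Prop} {a b x y : V}

open List

lemma IsPathOn.of_append_cons_cons {u v : List V} (h : IsPathOn E a b (u ++ x :: y :: v)) :
    IsPathOn E a x (u ++ [x]) ∧ IsPathOn E y b (y :: v) := by
  obtain ⟨hhead, hlast, hchain, hnodup⟩ := h
  replace hchain : (u ++ x :: y :: v).IsChain E := hchain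
  rw [isChain_append_cons_cons] at hchain
  rw [← singleton_append (l := y :: v), ← append_assoc] at hnodup hhead hlast
  refine ⟨⟨?_, by simp, hchain.1, hnodup.of_append_left⟩,
    ⟨rfl, ?_, hchain.2.2, hnodup.of_append_right⟩⟩
  · simpa [head?_append] using hhead
  · simpa [getLast?_append] using hlast

lemma IsPathOn.eq_of_forall_notMem {F : Finset (V × V)}
    (hforest : (SimpleGraph.fromRel fun a b => E a b ∧ (a, b) ∉ F).IsAcyclic) {p q : List V}
    (hp : IsPathOn E a b p) (hq : IsPathOn E a b q)
    (hpF : ∀ e ∈ p.consecutivePairs, e ∉ F) (hqF : ∀ e ∈ q.consecutivePairs, e ∉ F) :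
    p = q := by
  set G := SimpleGraph.fromRel fun a b => E a b ∧ (a, b) ∉ F
  have toPath : ∀ {r : List V}, IsPathOn E a b r → (∀ e ∈ r.consecutivePairs, e ∉ F) →
      ∃ w : G.Walk a b, w.IsPath ∧ w.support = r := by
    intro r ⟨hhead, hlast, hchain, hnodup⟩ hrF
    have hne : r ≠ [] := by rintro rfl; simp at hhead
    have hadj : r.IsChain G.Adj := by
      rw [isChain_iff_forall_mem_consecutivePairs]
      exact fun e he => (SimpleGraph.fromRel_adj ..).2
        ⟨isChain_iff_forall_mem_consecutivePairs.1 hnodup.isChain e he,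
          .inl ⟨isChain_iff_forall_mem_consecutivePairs.1 hchain e he, hrF e he⟩⟩
    have hhead' : r.head hne = a := by simpa [head?_eq_some_head hne] using hhead
    have hlast' : r.getLast hne = b := by simpa [getLast?_eq_some_getLast hne] using hlast
    refine ⟨(SimpleGraph.Walk.ofSupport r hne hadj).copy hhead' hlast', ?_, by simp⟩
    rw [SimpleGraph.Walk.isPath_def]
    simpa using hnodup
  obtain ⟨wp, hwp, rfl⟩ := toPath hp hpF
  obtain ⟨wq, hwq, rfl⟩ := toPath hq hqF
  have := (hforest.subsingleton_path a b).elim ⟨wp, hwp⟩ ⟨wq, hwq⟩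
  rw [show wp = wq from congrArg Subtype.val this]

end Paths

section Counting

variable {V : Type*} [DecidableEq V] {E : V → V → Prop} {F : Finset (V × V)}

open List

lemma IsPathOn.exists_of_filter_consecutivePairs_eq_cons {a b x y : V} {p : List V}
    {L : List (V × V)} (hp : IsPathOn E a b p)
    (hpL : p.consecutivePairs.filter (· ∈ F) = (x, y) :: L) :
    ∃ u v, p = u ++ x :: y :: v ∧ IsPathOn E a x (u ++ [x]) ∧
      (∀ e ∈ (u ++ [x]).consecutivePairs, e ∉ F) ∧ IsPathOn E y b (y :: v) ∧
      (y :: v).consecutivePairs.filter (· ∈ F) = L := by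
  obtain ⟨l₁, l₂, hsplit, hl₁, -, rfl⟩ := filter_eq_cons_iff.1 hpL
  obtain ⟨u, v, rfl, hu, hv⟩ := exists_of_consecutivePairs_eq_append_cons hsplit
  obtain ⟨hpre, hsuf⟩ := hp.of_append_cons_cons
  exact ⟨u, v, rfl, hpre, by simpa [hu] using hl₁, hsuf, by rw [hv]⟩

lemma IsPathOn.eq_of_filter_consecutivePairs_eq
    (hforest : (SimpleGraph.fromRel fun a b => E a b ∧ (a, b) ∉ F).IsAcyclic) {b : V} :
    ∀ {L : List (V × V)} {a : V} {p q : List V}, IsPathOn E a b p → IsPathOn E a b q →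
      p.consecutivePairs.filter (· ∈ F) = L → q.consecutivePairs.filter (· ∈ F) = L → p = q
  | [], _, _, _, hp, hq, hpL, hqL => by
    refine hp.eq_of_forall_notMem hforest hq ?_ ?_
    · simpa using filter_eq_nil_iff.1 hpL
    · simpa using filter_eq_nil_iff.1 hqL
  | (x, y) :: L, _, _, _, hp, hq, hpL, hqL => by
    obtain ⟨u, v, rfl, hpu, hpuF, hpv, hpvL⟩ := hp.exists_of_filter_consecutivePairs_eq_cons hpL
    obtain ⟨u', v', rfl, hqu, hquF, hqv, hqvL⟩ := hq.exists_of_filter_consecutivePairs_eq_cons hqL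
    have hpre : u ++ [x] = u' ++ [x] := hpu.eq_of_forall_notMem hforest hqu hpuF hquF
    have hsuf : y :: v = y :: v' := eq_of_filter_consecutivePairs_eq hforest hpv hqv hpvL hqvL
    rw [append_cancel_right hpre, (cons_inj_right y).1 hsuf]

lemma filter_consecutivePairs_eq_of_mem_iff (hacyc : NoDirCycle E) {p q : List V}
    (hp : p.IsChain E) (hq : q.IsChain E)
    (hpq : ∀ e ∈ F, e ∈ p.consecutivePairs ↔ e ∈ q.consecutivePairs) :
    p.consecutivePairs.filter (· ∈ F) = q.consecutivePairs.filter (· ∈ F) := by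
  let R : V × V → V × V → Prop := fun e e' => Relation.TransGen E e.1 e'.1
  have : Std.Irrefl R := ⟨fun e => hacyc e.1⟩
  have : Std.Antisymm R := ⟨fun _ _ h h' => (hacyc _ (h.trans h')).elim⟩
  refine (hp.pairwise_transGen_consecutivePairs.filter _).eq_of_mem_iff
    (hq.pairwise_transGen_consecutivePairs.filter _) fun e => ?_
  simp only [mem_filter, decide_eq_true_eq]
  exact ⟨fun h => ⟨(hpq e h.2).1 h.1, h.2⟩, fun h => ⟨(hpq e h.2).2 h.1, h.2⟩⟩

end Counting

theorem stmt5_general {V : Type*} (E : V → V → Prop)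
    (hacyc : NoDirCycle E) (s t : V)
    (k : ℕ) (F : Finset (V × V)) (hFcard : F.card = k)
    (hforest : (SimpleGraph.fromRel fun a b => E a b ∧ (a, b) ∉ F).IsAcyclic) :
    {p : List V | IsPathOn E s t p}.Finite ∧
    {p : List V | IsPathOn E s t p}.ncard ≤ 2 ^ k := by
  classical
  let usedEdges : List V → Finset (V × V) := fun p => F.filter (· ∈ p.consecutivePairs)
  have hmaps : Set.MapsTo usedEdges {p | IsPathOn E s t p} F.powerset := fun p _ =>
    Finset.mem_powerset.2 (Finset.filter_subset _ _)
  have hinj : Set.InjOn usedEdges {p | IsPathOn E s t p} := by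
    intro p hp q hq hpq
    refine hp.eq_of_filter_consecutivePairs_eq hforest hq rfl
      (filter_consecutivePairs_eq_of_mem_iff hacyc hq.2.2.1 hp.2.2.1 fun e he => ?_)
    simpa [usedEdges, he] using (Finset.ext_iff.1 hpq e).symm
  refine ⟨F.powerset.finite_toSet.of_injOn hmaps hinj, ?_⟩
  calc {p | IsPathOn E s t p}.ncard ≤ (F.powerset : Set (Finset (V × V))).ncard :=
        Set.ncard_le_ncard_of_injOn usedEdges hmaps hinj
    _ = 2 ^ k := by rw [Set.ncard_coe_finset, Finset.card_powerset, hFcard]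

/-- If `G` is a finite DAG and `F` is a set of `k` directed
edges of `G` whose removal makes the underlying undirected graph of `G` a
forest (acyclic), then `G` has at most `2^k` directed `s`–`t` paths. -/
theorem stmt5 {V : Type*} [Fintype V] (E : V → V → Prop)
    (hacyc : NoDirCycle E) (s t : V)
    (k : ℕ) (F : Finset (V × V)) (hF : ∀ e ∈ F, E e.1 e.2) (hFcard : F.card = k)
    (hforest : (SimpleGraph.fromRel fun a b => E a b ∧ (a, b) ∉ F).IsAcyclic) :
    {p : List V | IsPathOn E s t p}.Finite ∧
    {p : List V | IsPathOn E s t p}.ncard ≤ 2 ^ k :=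
  stmt5_general E hacyc s t k F hFcard hforest
end

section
/- Let G be a finite directed acyclic graph on n vertices with vertices s and t, and let S be a set of k vertices of G such that the underlying undirected graph of G − S (the graph obtained by deleting the vertices of S) is a forest. Then the number of directed s–t paths in G is at most k^k · n^{2k}. -/
/-!
Common definitions for time-inconsistent planning models (Kleinberg–Oren).
A task graph is given by a finite vertex type `V`, an edge relation
`E : V → V → Prop` and edge weights `w : V → V → ℝ`.  A directed path is
represented by the list of its vertices (nonempty, consecutive vertices joined
by edges, no repeated vertices).
-/

variable {V : Type*}

/-!
A simple `s`–`t` path is determined by the order in which it visits the vertices of `S` and by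
the predecessor and successor of each visited `v ∈ S`: the pieces between consecutive visits
avoid `S`, so they are paths with prescribed endpoints in the forest `G - S`, and such paths are
unique. Recording for each `v ∈ S` its rank among the visited ones and its two neighbours is thus
an injection into `S → Fin k × V × V`, a set with `k^k · n^(2k)` elements.
-/

open SimpleGraph

theorem Option.eq_of_getD_eq {α : Type*} {o o' : Option α} {a : α} (ho : a ∉ o) (ho' : a ∉ o')
    (h : o.getD a = o'.getD a) : o = o' := by
  cases o <;> cases o' <;> simp_all

namespace List

variable {α : Type*}

theorem head?_eq_of_getD_eq {a : α} {l₁ l₂ : List α} (h₁ : a ∉ l₁) (h₂ : a ∉ l₂)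
    (h : l₁.head?.getD a = l₂.head?.getD a) : l₁.head? = l₂.head? :=
  Option.eq_of_getD_eq (fun h' => h₁ (mem_of_mem_head? h')) (fun h' => h₂ (mem_of_mem_head? h')) h

theorem getLast?_eq_of_getD_eq {a : α} {l₁ l₂ : List α} (h₁ : a ∉ l₁) (h₂ : a ∉ l₂)
    (h : l₁.getLast?.getD a = l₂.getLast?.getD a) : l₁.getLast? = l₂.getLast? :=
  Option.eq_of_getD_eq (fun h' => h₁ (mem_of_mem_getLast? h'))
    (fun h' => h₂ (mem_of_mem_getLast? h')) h

theorem head?_eq_of_append_cons {a : α} {l₁ l₂ l₃ l₄ : List α} (h₁ : a ∉ l₁) (h₃ : a ∉ l₃)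
    (h : (l₁ ++ a :: l₂).head? = (l₃ ++ a :: l₄).head?) : l₁.head? = l₃.head? := by
  simp only [head?_append, head?_cons, Option.or_some, Option.some_inj] at h
  exact head?_eq_of_getD_eq h₁ h₃ h

theorem getLast?_eq_of_cons {a : α} {l₁ l₂ : List α} (h₁ : a ∉ l₁) (h₂ : a ∉ l₂)
    (h : (a :: l₁).getLast? = (a :: l₂).getLast?) : l₁.getLast? = l₂.getLast? := by
  rw [getLast?_cons, getLast?_cons, Option.some_inj] at h
  exact getLast?_eq_of_getD_eq h₁ h₂ h

theorem eq_of_nodup_of_idxOf_eq [BEq α] [LawfulBEq α] {l₁ l₂ : List α} (h₁ : l₁.Nodup)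
    (h₂ : l₂.Nodup) (hmem : ∀ a, a ∈ l₁ ↔ a ∈ l₂) (hidx : ∀ a ∈ l₁, l₁.idxOf a = l₂.idxOf a) :
    l₁ = l₂ := by
  refine ext_getElem ((perm_ext_iff_of_nodup h₁ h₂).mpr hmem).length_eq fun i hi₁ hi₂ => ?_
  have hi : l₂.idxOf l₁[i] = i := by rw [← hidx _ (getElem_mem hi₁), h₁.idxOf_getElem]
  have hlt : l₂.idxOf l₁[i] < l₂.length := idxOf_lt_length_of_mem ((hmem _).mp (getElem_mem hi₁))
  rw [← getElem_idxOf hlt]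
  exact getElem_congr_idx hi

theorem Nodup.notMem_of_append_cons {a : α} {l₁ l₂ : List α} (h : (l₁ ++ a :: l₂).Nodup) :
    a ∉ l₁ ∧ a ∉ l₂ := by
  simpa using (nodup_cons.mp (nodup_middle.mp h)).1

theorem IsChain.fromRel_adj {r : α → α → Prop} {l : List α} (hl : l.IsChain r) (hn : l.Nodup) :
    l.IsChain (fromRel r).Adj := by
  induction hl with
  | nil => exact .nil
  | singleton a => exact .singleton a
  | cons_cons hab _ ih =>
    obtain ⟨hne, hn⟩ := nodup_cons.mp hn
    exact .cons_cons ⟨fun h => hne (h ▸ mem_cons_self), Or.inl hab⟩ (ih hn)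

end List

theorem SimpleGraph.IsAcyclic.eq_of_isChain {α : Type*} {G : SimpleGraph α} (hG : G.IsAcyclic)
    {l₁ l₂ : List α} (h₁ : l₁.IsChain G.Adj) (h₂ : l₂.IsChain G.Adj) (hn₁ : l₁.Nodup)
    (hn₂ : l₂.Nodup) (hhead : l₁.head? = l₂.head?) (hlast : l₁.getLast? = l₂.getLast?) :
    l₁ = l₂ := by
  obtain rfl | hne₁ := eq_or_ne l₁ []
  · exact (List.head?_eq_none_iff.mp hhead.symm).symm
  have hne₂ : l₂ ≠ [] := by rintro rfl; simp_all
  rw [List.head?_eq_some_head hne₁, List.head?_eq_some_head hne₂, Option.some_inj] at hhead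
  rw [List.getLast?_eq_some_getLast hne₁, List.getLast?_eq_some_getLast hne₂,
    Option.some_inj] at hlast
  let w₁ : G.Path _ _ := ⟨Walk.ofSupport l₁ hne₁ h₁, by
    rw [Walk.isPath_def, Walk.support_ofSupport]; exact hn₁⟩
  let w₂ : G.Path _ _ := ⟨(Walk.ofSupport l₂ hne₂ h₂).copy hhead.symm hlast.symm, by
    rw [Walk.isPath_copy, Walk.isPath_def, Walk.support_ofSupport]; exact hn₂⟩
  have hw := congrArg (fun w : G.Path _ _ => w.1.support) ((hG.subsingleton_path _ _).elim w₁ w₂)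
  simpa [w₁, w₂] using hw

section

variable {E : V → V → Prop} {S : Finset V}

theorem List.IsChain.fromRel_adj_of_forall_notMem {l : List V} (hl : l.IsChain E) (hn : l.Nodup)
    (hS : ∀ x ∈ l, x ∉ S) : l.IsChain (fromRel fun a b => E a b ∧ a ∉ S ∧ b ∉ S).Adj :=
  (hl.imp_of_mem_imp fun a b ha hb hab => ⟨hab, hS a ha, hS b hb⟩).fromRel_adj hn

theorem eq_of_forall_notMem_of_isAcyclic
    (hforest : (fromRel fun a b => E a b ∧ a ∉ S ∧ b ∉ S).IsAcyclic) {p q : List V}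
    (hp : p.IsChain E) (hq : q.IsChain E) (hpn : p.Nodup) (hqn : q.Nodup)
    (hpS : ∀ x ∈ p, x ∉ S) (hqS : ∀ x ∈ q, x ∉ S)
    (hhead : p.head? = q.head?) (hlast : p.getLast? = q.getLast?) : p = q :=
  hforest.eq_of_isChain (hp.fromRel_adj_of_forall_notMem hpn hpS)
    (hq.fromRel_adj_of_forall_notMem hqn hqS) hpn hqn hhead hlast

def SameNeighborsOn (S : Finset V) (p q : List V) : Prop :=
  ∀ v ∈ S, ∀ A B C D : List V, p = A ++ v :: B → q = C ++ v :: D →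
    A.getLast? = C.getLast? ∧ B.head? = D.head?

theorem SameNeighborsOn.of_append_cons {A B C D : List V} {v : V}
    (h : SameNeighborsOn S (A ++ v :: B) (C ++ v :: D)) (hB : v ∉ B) (hD : v ∉ D) :
    SameNeighborsOn S B D := by
  rintro u hu A' B' C' D' rfl rfl
  obtain ⟨hlast, hhead⟩ := h u hu (A ++ v :: A') B' (C ++ v :: C') D' (by simp) (by simp)
  rw [List.getLast?_append_cons, List.getLast?_append_cons] at hlast
  exact ⟨List.getLast?_eq_of_cons (fun h => hB (by simp [h])) (fun h => hD (by simp [h])) hlast,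
    hhead⟩

theorem eq_of_filter_eq_of_sameNeighborsOn [DecidableEq V]
    (hforest : (fromRel fun a b => E a b ∧ a ∉ S ∧ b ∉ S).IsAcyclic) {p q : List V}
    (hp : p.IsChain E) (hq : q.IsChain E) (hpn : p.Nodup) (hqn : q.Nodup)
    (hhead : p.head? = q.head?) (hlast : p.getLast? = q.getLast?)
    (hfilter : p.filter (· ∈ S) = q.filter (· ∈ S)) (hnbr : SameNeighborsOn S p q) : p = q := by
  generalize hL : p.filter (· ∈ S) = L at hfilter
  induction L generalizing p q with
  | nil =>
    refine eq_of_forall_notMem_of_isAcyclic hforest hp hq hpn hqn ?_ ?_ hhead hlast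
    · simpa [List.filter_eq_nil_iff] using hL
    · simpa [List.filter_eq_nil_iff] using hfilter.symm
  | cons v L ih =>
    obtain ⟨A, B, rfl, hA, hv, hB⟩ := List.filter_eq_cons_iff.mp hL
    obtain ⟨C, D, rfl, hC, -, hD⟩ := List.filter_eq_cons_iff.mp hfilter.symm
    simp only [decide_eq_true_eq] at hA hC hv
    have hvA : v ∉ A := fun h => hA v h hv
    have hvC : v ∉ C := fun h => hC v h hv
    have hvB : v ∉ B := hpn.notMem_of_append_cons.2
    have hvD : v ∉ D := hqn.notMem_of_append_cons.2
    obtain ⟨hnbrA, hnbrB⟩ := hnbr v hv A B C D rfl rfl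
    have hAC : A = C :=
      eq_of_forall_notMem_of_isAcyclic hforest (hp.prefix (List.prefix_append _ _))
        (hq.prefix (List.prefix_append _ _)) hpn.of_append_left hqn.of_append_left hA hC
        (List.head?_eq_of_append_cons hvA hvC hhead) hnbrA
    have hBD : B = D := by
      rw [List.getLast?_append_cons, List.getLast?_append_cons] at hlast
      exact ih (hp.suffix (List.suffix_append _ _)).tail (hq.suffix (List.suffix_append _ _)).tail
        hpn.of_append_right.of_cons hqn.of_append_right.of_cons hnbrB
        (List.getLast?_eq_of_cons hvB hvD hlast) (hnbr.of_append_cons hvB hvD) hB hD.symm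
    rw [hAC, hBD]

end

section

variable [DecidableEq V]

-- With no predecessor (resp. successor) on `p`, the default is `v` itself; for `v ∉ p`,
-- `pathSucc p v = v` while `pathPred p v` is the last vertex of `p`.
def pathPred (p : List V) (v : V) : V := (p.takeWhile (· ≠ v)).getLast?.getD v

def pathSucc (p : List V) (v : V) : V := (p.dropWhile (· ≠ v)).tail.head?.getD v

theorem pathPred_append_cons {A : List V} {v : V} (hv : v ∉ A) (B : List V) :
    pathPred (A ++ v :: B) v = A.getLast?.getD v := by
  rw [pathPred,
    List.takeWhile_append_of_pos fun a ha => decide_eq_true (ne_of_mem_of_not_mem ha hv),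
    List.takeWhile_cons_of_neg (by simp), List.append_nil]

theorem pathSucc_append_cons {A : List V} {v : V} (hv : v ∉ A) (B : List V) :
    pathSucc (A ++ v :: B) v = B.head?.getD v := by
  rw [pathSucc,
    List.dropWhile_append_of_pos fun a ha => decide_eq_true (ne_of_mem_of_not_mem ha hv),
    List.dropWhile_cons_of_neg (by simp), List.tail_cons]

theorem pathSucc_of_notMem {p : List V} {v : V} (hv : v ∉ p) : pathSucc p v = v := by
  rw [pathSucc, List.dropWhile_eq_nil_iff.mpr
    fun a ha => decide_eq_true (ne_of_mem_of_not_mem ha hv)]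
  rfl

theorem mem_of_pathSucc_eq {p q : List V} {t v : V} (hp : p.getLast? = some t)
    (hq : q.getLast? = some t) (hqn : q.Nodup) (h : pathSucc p v = pathSucc q v) (hv : v ∈ q) :
    v ∈ p := by
  by_contra hvp
  obtain ⟨A, B, rfl⟩ := List.append_of_mem hv
  obtain ⟨hvA, hvB⟩ := hqn.notMem_of_append_cons
  rw [pathSucc_of_notMem hvp, pathSucc_append_cons hvA] at h
  have hB : B = [] := List.head?_eq_none_iff.mp <|
    List.head?_eq_of_getD_eq (l₂ := []) hvB List.not_mem_nil h.symm
  subst hB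
  simp only [List.getLast?_append_cons, List.getLast?_singleton, Option.some_inj] at hq
  exact hvp (hq ▸ List.mem_of_mem_getLast? hp)

-- The cap only matters for `v ∉ p`: on a simple path every rank is below `#S`.
def visitRank (S : Finset V) (p : List V) (v : S) : Fin S.card :=
  ⟨min ((p.filter (· ∈ S)).idxOf (v : V)) (S.card - 1), by
    have := Finset.card_pos.mpr ⟨_, v.2⟩; omega⟩

def pathCode (S : Finset V) (p : List V) (v : S) : Fin S.card × V × V :=
  (visitRank S p v, pathPred p v, pathSucc p v)

theorem length_filter_mem_le {p : List V} (hp : p.Nodup) (S : Finset V) :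
    (p.filter (· ∈ S)).length ≤ S.card := by
  rw [← List.toFinset_card_of_nodup (hp.filter _)]
  exact Finset.card_le_card fun x hx => by simp_all

theorem filter_eq_of_pathCode_eq {S : Finset V} {p q : List V} {t : V}
    (hp : p.getLast? = some t) (hq : q.getLast? = some t) (hpn : p.Nodup) (hqn : q.Nodup)
    (h : pathCode S p = pathCode S q) : p.filter (· ∈ S) = q.filter (· ∈ S) := by
  have hmem : ∀ v ∈ S, v ∈ p ↔ v ∈ q := fun v hv =>
    have hsucc := congrArg (fun c => (c ⟨v, hv⟩).2.2) h
    ⟨mem_of_pathSucc_eq hq hp hpn hsucc.symm, mem_of_pathSucc_eq hp hq hqn hsucc⟩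
  refine List.eq_of_nodup_of_idxOf_eq (hpn.filter _) (hqn.filter _) (fun v => ?_) fun v hv => ?_
  · simp only [List.mem_filter, decide_eq_true_eq]
    exact ⟨fun ⟨hvp, hv⟩ => ⟨(hmem v hv).1 hvp, hv⟩, fun ⟨hvq, hv⟩ => ⟨(hmem v hv).2 hvq, hv⟩⟩
  obtain ⟨hvp, hvS⟩ : v ∈ p ∧ v ∈ S := by simpa using hv
  have hvq : v ∈ q.filter (· ∈ S) :=
    List.mem_filter.mpr ⟨(hmem v hvS).1 hvp, decide_eq_true hvS⟩
  have hrank := congrArg (fun c => ((c ⟨v, hvS⟩).1 : ℕ)) h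
  simp only [pathCode, visitRank] at hrank
  have := List.idxOf_lt_length_of_mem hv
  have := List.idxOf_lt_length_of_mem hvq
  have := length_filter_mem_le hpn S
  have := length_filter_mem_le hqn S
  omega

theorem sameNeighborsOn_of_pathCode_eq {S : Finset V} {p q : List V} (hpn : p.Nodup)
    (hqn : q.Nodup) (h : pathCode S p = pathCode S q) : SameNeighborsOn S p q := by
  rintro v hv A B C D rfl rfl
  obtain ⟨hvA, hvB⟩ := hpn.notMem_of_append_cons
  obtain ⟨hvC, hvD⟩ := hqn.notMem_of_append_cons
  have hpred := congrArg (fun c => (c ⟨v, hv⟩).2.1) h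
  have hsucc := congrArg (fun c => (c ⟨v, hv⟩).2.2) h
  simp only [pathCode, pathPred_append_cons hvA, pathPred_append_cons hvC] at hpred
  simp only [pathCode, pathSucc_append_cons hvA, pathSucc_append_cons hvC] at hsucc
  exact ⟨List.getLast?_eq_of_getD_eq hvA hvC hpred, List.head?_eq_of_getD_eq hvB hvD hsucc⟩

theorem pathCode_injOn {E : V → V → Prop} {S : Finset V}
    (hforest : (fromRel fun a b => E a b ∧ a ∉ S ∧ b ∉ S).IsAcyclic) (s t : V) :
    Set.InjOn (pathCode S) {p | IsPathOn E s t p} := by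
  rintro p ⟨hps, hpt, hpc, hpn⟩ q ⟨hqs, hqt, hqc, hqn⟩ h
  exact eq_of_filter_eq_of_sameNeighborsOn hforest hpc hqc hpn hqn (hps.trans hqs.symm)
    (hpt.trans hqt.symm) (filter_eq_of_pathCode_eq hpt hqt hpn hqn h)
    (sameNeighborsOn_of_pathCode_eq hpn hqn h)

end

theorem stmt6_general {V : Type*} [Fintype V] (E : V → V → Prop)
    (s t : V)
    (k : ℕ) (S : Finset V) (hScard : S.card = k)
    (hforest : (SimpleGraph.fromRel fun a b => E a b ∧ a ∉ S ∧ b ∉ S).IsAcyclic) :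
    {p : List V | IsPathOn E s t p}.Finite ∧
    {p : List V | IsPathOn E s t p}.ncard ≤ k ^ k * Fintype.card V ^ (2 * k) := by
  classical
  have hinj := (pathCode_injOn hforest s t).injective
  refine ⟨Set.finite_coe_iff.mp (Finite.of_injective _ hinj), ?_⟩
  rw [← Nat.card_coe_set_eq]
  calc _ ≤ Nat.card (S → Fin S.card × V × V) := Nat.card_le_card_of_injective _ hinj
    _ = k ^ k * Fintype.card V ^ (2 * k) := by
      simp only [Nat.card_eq_fintype_card, Fintype.card_fun, Fintype.card_prod, Fintype.card_fin,
        Fintype.card_coe, hScard]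
      ring

/-- If `G` is a finite DAG on `n` vertices and `S` is a set of
`k` vertices such that the underlying undirected graph of `G - S` is a forest,
then `G` has at most `k^k · n^(2k)` directed `s`–`t` paths. -/
theorem stmt6 {V : Type*} [Fintype V] (E : V → V → Prop)
    (hacyc : NoDirCycle E) (s t : V)
    (k : ℕ) (S : Finset V) (hScard : S.card = k)
    (hforest : (SimpleGraph.fromRel fun a b => E a b ∧ a ∉ S ∧ b ∉ S).IsAcyclic) :
    {p : List V | IsPathOn E s t p}.Finite ∧
    {p : List V | IsPathOn E s t p}.ncard ≤ k ^ k * Fintype.card V ^ (2 * k) :=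
  stmt6_general E s t k S hScard hforest
end
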